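/- arXiv:1011.0592 — 2 statements merged into one kernel-verified Lean document; each statement's English description precedes it below -/
import Mathlib

section
/- For every bounded measurable function h : ℝ → ℝ one has E[h(Y_1)] = E[h(Z)·w(G(Z))], where G(z) = P(Z ≤ z) is the cumulative distribution function of Z and w(u) = 1/Ṁ(M^{−1}(1 − u)) for u ∈ [0,1]. -/
/-!
Conditioning on `N`, independence gives `P(Z > z) = E[(1 - F z)^N] = M(1 - F z)`, so
`G = 1 - M(1 - F)` and `w(G z) = 1 / Ṁ(1 - F z)`. Since `F` is continuous, `F(Y₁)` is uniform
on `[0, 1]` (probability integral transform), which turns `∫_{y ≤ z} n (1 - F y)^(n-1) dF(y)`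
into `∫₀^{F z} n (1 - u)^(n-1) du = 1 - (1 - F z)^n`. Averaging over `N` (Tonelli) shows that
the law of `Z` has density `Ṁ(1 - F)` with respect to the law of `Y₁`; this density lies between
`P(N = 1) > 0` and `E[N] < ∞`, so dividing by it recovers `E[h(Y₁)]` from `E[h(Z) w(G(Z))]`.
-/

open MeasureTheory ProbabilityTheory Set Filter Topology Function
open scoped ENNReal

lemma Set.Iic_inter_Icc_of_le {α : Type*} [Preorder α] {a b c : α} (h : c ≤ b) :
    Iic c ∩ Icc a b = Icc a c := by
  ext x
  exact ⟨fun hx => ⟨hx.2.1, hx.1⟩, fun hx => ⟨hx.2, hx.1, hx.2.trans h⟩⟩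

namespace ProbabilityTheory

section Cdf

variable {κ : Measure ℝ} [IsProbabilityMeasure κ]

lemma measure_Ioi_eq_ofReal_one_sub_cdf (x : ℝ) : κ (Ioi x) = ENNReal.ofReal (1 - cdf κ x) := by
  rw [← compl_Iic, prob_compl_eq_one_sub measurableSet_Iic, ← ofReal_cdf,
    ENNReal.ofReal_sub _ (cdf_nonneg κ x), ENNReal.ofReal_one]

/- The preimage is contained in `Iic` of its largest point, and contains `Iic a` for any `a` with
`cdf κ a = u` (intermediate value theorem). -/
lemma measure_preimage_cdf_Iic (hc : Continuous (cdf κ)) {u : ℝ} (hu0 : 0 ≤ u) (hu1 : u < 1) :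
    κ (cdf κ ⁻¹' Iic u) = ENNReal.ofReal u := by
  apply le_antisymm
  · obtain ⟨b, hb⟩ := ((tendsto_cdf_atTop κ).eventually (lt_mem_nhds hu1)).exists_forall_of_atTop
    have hbdd : BddAbove (cdf κ ⁻¹' Iic u) :=
      ⟨b, fun y hy => not_lt.1 fun hby => (hb y hby.le).not_ge hy⟩
    rcases (cdf κ ⁻¹' Iic u).eq_empty_or_nonempty with hempty | hne
    · simp [hempty]
    calc κ (cdf κ ⁻¹' Iic u) ≤ κ (Iic (sSup (cdf κ ⁻¹' Iic u))) :=
          measure_mono fun y hy => le_csSup hbdd hy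
      _ = ENNReal.ofReal (cdf κ (sSup (cdf κ ⁻¹' Iic u))) := (ofReal_cdf κ _).symm
      _ ≤ ENNReal.ofReal u :=
          ENNReal.ofReal_le_ofReal ((isClosed_Iic.preimage hc).csSup_mem hne hbdd)
  · rcases hu0.eq_or_lt with rfl | hu0
    · simp
    obtain ⟨x₀, hx₀⟩ := ((tendsto_cdf_atBot κ).eventually (gt_mem_nhds hu0)).exists
    obtain ⟨x₁, hx₁⟩ := ((tendsto_cdf_atTop κ).eventually (lt_mem_nhds hu1)).exists
    obtain ⟨a, rfl⟩ := intermediate_value_univ x₀ x₁ hc ⟨hx₀.le, hx₁.le⟩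
    rw [ofReal_cdf]
    exact measure_mono fun y hy => monotone_cdf κ hy

theorem map_cdf_eq_restrict_volume (hc : Continuous (cdf κ)) :
    κ.map (cdf κ) = volume.restrict (Icc 0 1) := by
  refine Measure.ext_of_Iic _ _ fun u => ?_
  rw [Measure.map_apply hc.measurable measurableSet_Iic, Measure.restrict_apply measurableSet_Iic]
  rcases lt_or_ge u 0 with hu0 | hu0
  · have hpre : cdf κ ⁻¹' Iic u = ∅ :=
      eq_empty_of_forall_notMem fun y hy => (hu0.trans_le (cdf_nonneg κ y)).not_ge hy
    have hinter : Iic u ∩ Icc 0 1 = ∅ :=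
      eq_empty_of_forall_notMem fun x hx => (hu0.trans_le hx.2.1).not_ge hx.1
    simp [hpre, hinter]
  rcases lt_or_ge u 1 with hu1 | hu1
  · rw [measure_preimage_cdf_Iic hc hu0 hu1, Iic_inter_Icc_of_le hu1.le, Real.volume_Icc, sub_zero]
  · have hpre : cdf κ ⁻¹' Iic u = univ :=
      eq_univ_of_forall fun y => (cdf_le_one κ y).trans hu1
    rw [hpre, inter_eq_right.2 fun x hx => hx.2.trans hu1]
    simp

theorem setLIntegral_Iic_comp_cdf (hc : Continuous (cdf κ)) {g : ℝ → ℝ≥0∞} (hg : Measurable g)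
    (z : ℝ) : ∫⁻ y in Iic z, g (cdf κ y) ∂κ = ∫⁻ u in Icc 0 (cdf κ z), g u := by
  have hpre : κ (cdf κ ⁻¹' Iic (cdf κ z)) = κ (Iic z) := by
    rw [← Measure.map_apply hc.measurable measurableSet_Iic, map_cdf_eq_restrict_volume hc,
      Measure.restrict_apply measurableSet_Iic, Iic_inter_Icc_of_le (cdf_le_one κ z),
      Real.volume_Icc, sub_zero, ofReal_cdf]
  have hae : Iic z =ᵐ[κ] cdf κ ⁻¹' Iic (cdf κ z) :=
    ae_eq_of_subset_of_measure_ge (fun y hy => monotone_cdf κ hy) hpre.le nullMeasurableSet_Iic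
      (measure_ne_top κ _)
  rw [setLIntegral_congr hae, ← setLIntegral_map measurableSet_Iic hg hc.measurable,
    map_cdf_eq_restrict_volume hc, Measure.restrict_restrict measurableSet_Iic,
    Iic_inter_Icc_of_le (cdf_le_one κ z)]

lemma integral_natCast_mul_one_sub_pow (n : ℕ) (c : ℝ) :
    ∫ u in (0)..c, (n : ℝ) * (1 - u) ^ (n - 1) = 1 - (1 - c) ^ n := by
  have hderiv : ∀ u, HasDerivAt (fun u => -(1 - u) ^ n) ((n : ℝ) * (1 - u) ^ (n - 1)) u :=
    fun u => by simpa using (((hasDerivAt_id u).const_sub 1).fun_pow n).fun_neg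
  rw [intervalIntegral.integral_eq_sub_of_hasDerivAt (fun u _ => hderiv u)
    ((by fun_prop : Continuous fun u : ℝ => (n : ℝ) * (1 - u) ^ (n - 1)).intervalIntegrable _ _)]
  ring

lemma lintegral_Icc_natCast_mul_ofReal_one_sub_pow (n : ℕ) {c : ℝ} (hc0 : 0 ≤ c) (hc1 : c ≤ 1) :
    ∫⁻ u in Icc 0 c, n * ENNReal.ofReal (1 - u) ^ (n - 1) = 1 - ENNReal.ofReal (1 - c) ^ n := by
  have hnonneg : ∀ u ∈ Icc 0 c, 0 ≤ (n : ℝ) * (1 - u) ^ (n - 1) := fun u hu =>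
    mul_nonneg n.cast_nonneg (pow_nonneg (by linarith [hu.2]) _)
  have hofReal : EqOn (fun u => n * ENNReal.ofReal (1 - u) ^ (n - 1))
      (fun u => ENNReal.ofReal (n * (1 - u) ^ (n - 1))) (Icc 0 c) := fun u hu => by
    dsimp only
    rw [ENNReal.ofReal_mul n.cast_nonneg, ENNReal.ofReal_natCast,
      ENNReal.ofReal_pow (by linarith [hu.2])]
  rw [setLIntegral_congr_fun measurableSet_Icc hofReal, ← ofReal_integral_eq_lintegral_ofReal
      ((by fun_prop : Continuous fun u : ℝ => (n : ℝ) * (1 - u) ^ (n - 1)).integrableOn_Icc)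
      ((ae_restrict_iff' measurableSet_Icc).2 (ae_of_all _ hnonneg)),
    integral_Icc_eq_integral_Ioc, ← intervalIntegral.integral_of_le hc0,
    integral_natCast_mul_one_sub_pow, ENNReal.ofReal_sub _ (by positivity), ENNReal.ofReal_one,
    ENNReal.ofReal_pow (by linarith)]

theorem lintegral_Iic_natCast_mul_measure_Ioi_pow (hc : Continuous (cdf κ)) (n : ℕ) (z : ℝ) :
    ∫⁻ y in Iic z, n * κ (Ioi y) ^ (n - 1) ∂κ = 1 - κ (Ioi z) ^ n := by
  simp_rw [measure_Ioi_eq_ofReal_one_sub_cdf]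
  rw [setLIntegral_Iic_comp_cdf hc (g := fun u => n * ENNReal.ofReal (1 - u) ^ (n - 1))
      (by fun_prop) z,
    lintegral_Icc_natCast_mul_ofReal_one_sub_pow n (cdf_nonneg κ z) (cdf_le_one κ z)]

end Cdf

variable {Ω : Type*} {Y : ℕ → Ω → ℝ} {N : Ω → ℕ} {Z : Ω → ℝ}

lemma setOf_lt_eq_iUnion (hZ : ∀ ω z, z < Z ω ↔ ∀ k < N ω, z < Y k ω) (z : ℝ) :
    {ω | z < Z ω} = ⋃ n, N ⁻¹' {n} ∩ ⋂ k ∈ Finset.range n, Y k ⁻¹' Ioi z := by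
  ext ω
  simp [hZ]

variable [MeasurableSpace Ω] {μ : Measure Ω}

lemma measurable_of_lt_iff (hY : ∀ k, Measurable (Y k)) (hN : Measurable N)
    (hZ : ∀ ω z, z < Z ω ↔ ∀ k < N ω, z < Y k ω) : Measurable Z :=
  measurable_of_Ioi fun z => by
    rw [show Z ⁻¹' Ioi z = _ from setOf_lt_eq_iUnion hZ z]
    measurability

lemma lintegral_comp_eq_tsum (hN : Measurable N) (f : ℕ → ℝ≥0∞) :
    ∫⁻ ω, f (N ω) ∂μ = ∑' n, f n * μ (N ⁻¹' {n}) := by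
  rw [← lintegral_map measurable_from_top hN, lintegral_countable']
  simp_rw [Measure.map_apply hN (measurableSet_singleton _)]

theorem measure_lt_eq_lintegral_pow {κ : Measure ℝ} (hY : ∀ k, Measurable (Y k))
    (hYκ : ∀ k, μ.map (Y k) = κ) (hiid : iIndepFun Y μ) (hN : Measurable N)
    (hindep : IndepFun N (fun ω k => Y k ω) μ) (hZ : ∀ ω z, z < Z ω ↔ ∀ k < N ω, z < Y k ω)
    (z : ℝ) : μ {ω | z < Z ω} = ∫⁻ ω, κ (Ioi z) ^ N ω ∂μ := by
  have hdisj : Pairwise (Disjoint on fun n => N ⁻¹' {n} ∩ ⋂ k ∈ Finset.range n, Y k ⁻¹' Ioi z) :=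
    fun m n hmn => disjoint_left.2 fun ω hm hn => hmn (hm.1.symm.trans hn.1)
  rw [setOf_lt_eq_iUnion hZ, measure_iUnion hdisj, lintegral_comp_eq_tsum hN]
  · refine tsum_congr fun n => ?_
    have hvec : (fun ω k => Y k ω) ⁻¹' {y | ∀ k ∈ Finset.range n, z < y k} =
        ⋂ k ∈ Finset.range n, Y k ⁻¹' Ioi z := by
      ext ω; simp
    rw [← hvec, hindep.measure_inter_preimage_eq_mul _ _ (measurableSet_singleton n)
        (by measurability), hvec,
      hiid.measure_inter_preimage_eq_mul _ (fun _ _ => measurableSet_Ioi)]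
    simp_rw [← Measure.map_apply (hY _) measurableSet_Ioi, hYκ]
    rw [Finset.prod_const, Finset.card_range, mul_comm]
  · measurability

lemma integral_pow_eq_toReal_lintegral (hN : Measurable N) {u : ℝ} (hu : 0 ≤ u) :
    ∫ ω, u ^ N ω ∂μ = (∫⁻ ω, ENNReal.ofReal u ^ N ω ∂μ).toReal := by
  have hm : Measurable fun ω => ENNReal.ofReal u ^ N ω := measurable_from_top.comp hN
  rw [← integral_toReal hm.aemeasurable
    (ae_of_all _ fun _ => ENNReal.pow_lt_top ENNReal.ofReal_lt_top)]
  simp [ENNReal.toReal_ofReal hu]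

lemma integral_natCast_mul_pow_pred_eq_toReal_lintegral (hN : Measurable N) {u : ℝ} (hu : 0 ≤ u) :
    ∫ ω, (N ω : ℝ) * u ^ (N ω - 1) ∂μ =
      (∫⁻ ω, N ω * ENNReal.ofReal u ^ (N ω - 1) ∂μ).toReal := by
  have hm : Measurable fun ω => (N ω : ℝ≥0∞) * ENNReal.ofReal u ^ (N ω - 1) :=
    (measurable_from_top (f := fun n : ℕ => (n : ℝ≥0∞) * ENNReal.ofReal u ^ (n - 1))).comp hN
  rw [← integral_toReal hm.aemeasurable (ae_of_all _ fun _ =>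
    ENNReal.mul_lt_top (ENNReal.natCast_lt_top _) (ENNReal.pow_lt_top ENNReal.ofReal_lt_top))]
  simp [ENNReal.toReal_ofReal hu]

lemma cdf_map_apply [IsProbabilityMeasure μ] {X : Ω → ℝ} (hX : Measurable X) (z : ℝ) :
    cdf (μ.map X) z = (μ {ω | X ω ≤ z}).toReal := by
  have : IsProbabilityMeasure (μ.map X) := Measure.isProbabilityMeasure_map hX.aemeasurable
  rw [cdf_eq_real, measureReal_def, Measure.map_apply hX measurableSet_Iic]
  rfl

theorem cdf_map_eq_one_sub_integral_pow [IsProbabilityMeasure μ] {κ : Measure ℝ}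
    [IsProbabilityMeasure κ] (hY : ∀ k, Measurable (Y k)) (hYκ : ∀ k, μ.map (Y k) = κ)
    (hiid : iIndepFun Y μ) (hN : Measurable N) (hindep : IndepFun N (fun ω k => Y k ω) μ)
    (hZ : ∀ ω z, z < Z ω ↔ ∀ k < N ω, z < Y k ω) (z : ℝ) :
    cdf (μ.map Z) z = 1 - ∫ ω, (1 - cdf κ z) ^ N ω ∂μ := by
  have hZm := measurable_of_lt_iff hY hN hZ
  have hcompl : {ω | Z ω ≤ z} = {ω | z < Z ω}ᶜ := by ext; simp
  rw [cdf_map_apply hZm, hcompl, ← measureReal_def,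
    probReal_compl_eq_one_sub (measurableSet_lt measurable_const hZm), measureReal_def,
    integral_pow_eq_toReal_lintegral hN (sub_nonneg.2 (cdf_le_one κ z)),
    ← measure_Ioi_eq_ofReal_one_sub_cdf, measure_lt_eq_lintegral_pow hY hYκ hiid hN hindep hZ]

/-- With `κ` the law of `Y₁`, this is `Ṁ(1 - F y)` as an `ℝ≥0∞`: the density of the law of `Z`
with respect to `κ`. -/
noncomputable def minDensity (μ : Measure Ω) (N : Ω → ℕ) (κ : Measure ℝ) (y : ℝ) : ℝ≥0∞ :=
  ∫⁻ ω, N ω * κ (Ioi y) ^ (N ω - 1) ∂μ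

lemma measurable_minDensity (κ : Measure ℝ) : Measurable (minDensity μ N κ) :=
  Antitone.measurable fun _ _ hab => lintegral_mono fun _ => by gcongr

lemma toReal_minDensity {κ : Measure ℝ} [IsProbabilityMeasure κ] (hN : Measurable N) (y : ℝ) :
    (minDensity μ N κ y).toReal = ∫ ω, (N ω : ℝ) * (1 - cdf κ y) ^ (N ω - 1) ∂μ := by
  rw [integral_natCast_mul_pow_pred_eq_toReal_lintegral hN (sub_nonneg.2 (cdf_le_one κ y)),
    ← measure_Ioi_eq_ofReal_one_sub_cdf]
  rfl

lemma minDensity_ne_zero (hN : Measurable N) (h1 : μ {ω | N ω = 1} ≠ 0) (κ : Measure ℝ) (y : ℝ) :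
    minDensity μ N κ y ≠ 0 := by
  refine (pos_iff_ne_zero.2 h1).trans_le ?_ |>.ne'
  calc μ {ω | N ω = 1} = ∫⁻ _ in {ω | N ω = 1}, 1 ∂μ := (setLIntegral_one _).symm
    _ = ∫⁻ ω in {ω | N ω = 1}, N ω * κ (Ioi y) ^ (N ω - 1) ∂μ :=
        setLIntegral_congr_fun (hN (measurableSet_singleton 1)) fun ω hω => by simp [hω.out]
    _ ≤ minDensity μ N κ y := setLIntegral_le_lintegral _ _

lemma minDensity_ne_top {κ : Measure ℝ} [IsProbabilityMeasure κ]
    (hN : Integrable (fun ω => (N ω : ℝ)) μ) (y : ℝ) : minDensity μ N κ y ≠ ∞ :=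
  ne_top_of_le_ne_top (by simpa using hN.lintegral_lt_top.ne)
    (lintegral_mono fun _ => mul_le_of_le_one_right' (pow_le_one' prob_le_one _))

theorem map_eq_withDensity_minDensity [IsProbabilityMeasure μ] {κ : Measure ℝ}
    [IsProbabilityMeasure κ] (hc : Continuous (cdf κ)) (hY : ∀ k, Measurable (Y k))
    (hYκ : ∀ k, μ.map (Y k) = κ) (hiid : iIndepFun Y μ) (hN : Measurable N)
    (hindep : IndepFun N (fun ω k => Y k ω) μ) (hZ : ∀ ω z, z < Z ω ↔ ∀ k < N ω, z < Y k ω) :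
    μ.map Z = κ.withDensity (minDensity μ N κ) := by
  have hZm := measurable_of_lt_iff hY hN hZ
  have : IsProbabilityMeasure (μ.map Z) := Measure.isProbabilityMeasure_map hZm.aemeasurable
  have hκIoi : Measurable fun y => κ (Ioi y) :=
    Antitone.measurable fun _ _ hab => measure_mono (Ioi_subset_Ioi hab)
  have hjoint : Measurable (uncurry fun y ω => (N ω : ℝ≥0∞) * κ (Ioi y) ^ (N ω - 1)) :=
    ((measurable_from_top.comp hN).comp measurable_snd).mul ((hκIoi.comp measurable_fst).pow
      ((measurable_from_top (f := fun n : ℕ => n - 1)).comp (hN.comp measurable_snd)))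
  refine Measure.ext_of_Iic _ _ fun z => ?_
  unfold minDensity
  rw [Measure.map_apply hZm measurableSet_Iic, withDensity_apply _ measurableSet_Iic,
    lintegral_lintegral_swap hjoint.aemeasurable]
  simp_rw [lintegral_Iic_natCast_mul_measure_Ioi_pow hc]
  have hsurv := measure_lt_eq_lintegral_pow hY hYκ hiid hN hindep hZ z
  have hpow : Measurable fun ω => κ (Ioi z) ^ N ω := measurable_from_top.comp hN
  rw [lintegral_sub hpow (hsurv ▸ measure_ne_top μ _)
      (ae_of_all _ fun _ => pow_le_one' prob_le_one _), lintegral_one, measure_univ, ← hsurv,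
    ← prob_compl_eq_one_sub (measurableSet_lt measurable_const hZm)]
  congr 1
  ext ω
  simp

end ProbabilityTheory

lemma MeasureTheory.integral_mul_inv_toReal_withDensity {X : Type*} [MeasurableSpace X]
    {κ : Measure X} {d : X → ℝ≥0∞} (hd : Measurable d) (hd0 : ∀ᵐ x ∂κ, d x ≠ 0)
    (hdtop : ∀ᵐ x ∂κ, d x ≠ ∞) (g : X → ℝ) :
    ∫ x, g x * (d x).toReal⁻¹ ∂κ.withDensity d = ∫ x, g x ∂κ := by
  rw [integral_withDensity_eq_integral_toReal_smul hd (hdtop.mono fun _ h => h.lt_top)]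
  refine integral_congr_ae (hd0.and hdtop |>.mono fun x hx => ?_)
  have hpos := ENNReal.toReal_pos hx.1 hx.2
  simp only [smul_eq_mul]
  field_simp

theorem pileup_weighted_moment_general
    {Ω : Type*} [MeasurableSpace Ω] (μ : Measure Ω) [IsProbabilityMeasure μ]
    (Y : ℕ → Ω → ℝ) (N : Ω → ℕ) (Z : Ω → ℝ) (F : ℝ → ℝ)
    (M Mdot Minv w G : ℝ → ℝ)
    (hYmeas : ∀ k, Measurable (Y k))
    (hNmeas : Measurable N)
    (hiid : iIndepFun Y μ)
    (hident : ∀ k, Measure.map (Y k) μ = Measure.map (Y 0) μ)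
    (hN1 : ∀ ω, 1 ≤ N ω)
    (hindep : IndepFun N (fun ω k => Y k ω) μ)
    (hF : ∀ z, F z = (μ {ω | Y 0 ω ≤ z}).toReal)
    (hFcont : Continuous F)
    (hEN : Integrable (fun ω => (N ω : ℝ)) μ)
    (hp1 : μ {ω | N ω = 1} ≠ 0)
    (hZ : ∀ ω (h : (Finset.range (N ω)).Nonempty),
        Z ω = (Finset.range (N ω)).inf' h (fun k => Y k ω))
    (hM : ∀ u, M u = ∫ ω, u ^ N ω ∂μ)
    (hMdot : ∀ u, Mdot u = ∫ ω, (N ω : ℝ) * u ^ (N ω - 1) ∂μ)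
    (hMinvl : ∀ u ∈ Set.Icc (0 : ℝ) 1, Minv (M u) = u)
    (hw : ∀ u, w u = (Mdot (Minv (1 - u)))⁻¹)
    (hG : ∀ z, G z = (μ {ω | Z ω ≤ z}).toReal) :
    ∀ h : ℝ → ℝ, Measurable h → (∃ C : ℝ, ∀ x, |h x| ≤ C) →
      ∫ ω, h (Y 0 ω) ∂μ = ∫ ω, h (Z ω) * w (G (Z ω)) ∂μ := by
  intro h hh _
  set κ := μ.map (Y 0)
  have : IsProbabilityMeasure κ := Measure.isProbabilityMeasure_map (hYmeas 0).aemeasurable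
  obtain rfl : F = cdf κ := funext fun z => (hF z).trans (cdf_map_apply (hYmeas 0) z).symm
  have hZlt : ∀ ω z, z < Z ω ↔ ∀ k < N ω, z < Y k ω := fun ω z => by
    rw [hZ ω (Finset.nonempty_range_iff.2 (Nat.one_le_iff_ne_zero.1 (hN1 ω))), Finset.lt_inf'_iff]
    simp
  have hZm := measurable_of_lt_iff hYmeas hNmeas hZlt
  obtain rfl : G = cdf (μ.map Z) := funext fun z => (hG z).trans (cdf_map_apply hZm z).symm
  have hwG : ∀ z, w (cdf (μ.map Z) z) = (minDensity μ N κ z).toReal⁻¹ := fun z => by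
    rw [hw, cdf_map_eq_one_sub_integral_pow hYmeas hident hiid hNmeas hindep hZlt, sub_sub_cancel,
      ← hM, hMinvl _ ⟨sub_nonneg.2 (cdf_le_one κ z), sub_le_self _ (cdf_nonneg κ z)⟩, hMdot,
      toReal_minDensity hNmeas]
  calc ∫ ω, h (Y 0 ω) ∂μ = ∫ y, h y ∂κ :=
        (integral_map (hYmeas 0).aemeasurable hh.aestronglyMeasurable).symm
    _ = ∫ y, h y * (minDensity μ N κ y).toReal⁻¹ ∂μ.map Z := by
        rw [map_eq_withDensity_minDensity hFcont hYmeas hident hiid hNmeas hindep hZlt,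
          integral_mul_inv_toReal_withDensity (measurable_minDensity κ)
            (ae_of_all _ (minDensity_ne_zero hNmeas hp1 κ)) (ae_of_all _ (minDensity_ne_top hEN))]
    _ = ∫ ω, h (Z ω) * w (cdf (μ.map Z) (Z ω)) ∂μ := by
        have := measurable_minDensity (μ := μ) (N := N) κ
        rw [integral_map hZm.aemeasurable (by fun_prop)]
        simp_rw [hwG]

/-- In the pile-up model, for every bounded measurable `h : ℝ → ℝ`,
`E[h(Y₁)] = E[h(Z) * w(G(Z))]`, where `G` is the cdf of `Z = min{Y_1, …, Y_N}` and
`w u = 1 / Ṁ(M⁻¹(1 - u))`, with `M u = E[u^N]`, `Ṁ u = E[N u^(N-1)]` and `M⁻¹` the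
inverse of the bijection `M : [0,1] → [0,1]`. -/
theorem pileup_weighted_moment
    {Ω : Type*} [MeasurableSpace Ω] (μ : Measure Ω) [IsProbabilityMeasure μ]
    (Y : ℕ → Ω → ℝ) (N : Ω → ℕ) (Z : Ω → ℝ) (F fY : ℝ → ℝ)
    (M Mdot Minv w G : ℝ → ℝ)
    (hYmeas : ∀ k, Measurable (Y k))
    (hNmeas : Measurable N)
    (hiid : iIndepFun Y μ)
    (hident : ∀ k, Measure.map (Y k) μ = Measure.map (Y 0) μ)
    (hN1 : ∀ ω, 1 ≤ N ω)
    (hindep : IndepFun N (fun ω k => Y k ω) μ)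
    (hF : ∀ z, F z = (μ {ω | Y 0 ω ≤ z}).toReal)
    (hFcont : Continuous F)
    (hfYmeas : Measurable fY)
    (hfYpos : ∀ x, 0 ≤ fY x)
    (hdens : ∀ z, F z = ∫ t in Set.Iic z, fY t)
    (hEN : Integrable (fun ω => (N ω : ℝ)) μ)
    (hp1 : μ {ω | N ω = 1} ≠ 0)
    (hZ : ∀ ω (h : (Finset.range (N ω)).Nonempty),
        Z ω = (Finset.range (N ω)).inf' h (fun k => Y k ω))
    (hM : ∀ u, M u = ∫ ω, u ^ N ω ∂μ)
    (hMdot : ∀ u, Mdot u = ∫ ω, (N ω : ℝ) * u ^ (N ω - 1) ∂μ)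
    (hMinvmem : ∀ u ∈ Set.Icc (0 : ℝ) 1, Minv u ∈ Set.Icc (0 : ℝ) 1)
    (hMinvr : ∀ u ∈ Set.Icc (0 : ℝ) 1, M (Minv u) = u)
    (hMinvl : ∀ u ∈ Set.Icc (0 : ℝ) 1, Minv (M u) = u)
    (hw : ∀ u, w u = (Mdot (Minv (1 - u)))⁻¹)
    (hG : ∀ z, G z = (μ {ω | Z ω ≤ z}).toReal) :
    ∀ h : ℝ → ℝ, Measurable h → (∃ C : ℝ, ∀ x, |h x| ≤ C) →
      ∫ ω, h (Y 0 ω) ∂μ = ∫ ω, h (Z ω) * w (G (Z ω)) ∂μ :=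
  pileup_weighted_moment_general μ Y N Z F M Mdot Minv w G hYmeas hNmeas hiid hident hN1 hindep hF
    hFcont hEN hp1 hZ hM hMdot hMinvl hw hG
end

section
/- For every integer m ≥ 1 with Δ_η(m) < ∞ and every t ∈ L²(ℝ) with ‖t‖_{L²} = 1 and supp(t*) ⊆ [−πm, πm], the remainder process satisfies |R̄_n(t)|² ≤ c_w²·Δ_η(m)·‖Ĝ_n − G‖_∞², where ‖Ĝ_n − G‖_∞ = sup_{z∈ℝ} |Ĝ_n(z) − G(z)|. -/
open MeasureTheory ProbabilityTheory Real

/-- Fourier transform `u*(t) = ∫ e^{-itx} u(x) dx` of a complex-valued function. -/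
noncomputable def ft (f : ℝ → ℂ) (t : ℝ) : ℂ :=
  ∫ x : ℝ, Complex.exp (-(t * x) * Complex.I) * f x

/-- Empirical cumulative distribution function of the first `n` values of `z`. -/
noncomputable def empCdf (n : ℕ) (z : ℕ → ℝ) (x : ℝ) : ℝ :=
  (∑ i ∈ Finset.range n, if z i ≤ x then (1 : ℝ) else 0) / n

/-- `Δ_η(m) = (2π)⁻¹ ∫_{-πm}^{πm} |f_η*(u)|⁻² du`. -/
noncomputable def deltaEta (fη : ℝ → ℝ) (m : ℕ) : ℝ :=
  (2 * π)⁻¹ * ∫ u in (-(π * m))..(π * m), 1 / ‖ft (fun y => (fη y : ℂ)) u‖ ^ 2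

/-- The remainder process
`R̄_n(t) = (2πn)⁻¹ ∑_k (∫ t*(-u) e^{-iuZ_k}/f_η*(u) du) (w(Ĝ_n(Z_k)) − w(G(Z_k)))`. -/
noncomputable def rbar {Ω : Type*} (Z : ℕ → Ω → ℝ) (G w fη : ℝ → ℝ) (n : ℕ)
    (t : ℝ → ℝ) (ω : Ω) : ℂ :=
  (((2 * π * n)⁻¹ : ℝ) : ℂ) * ∑ k ∈ Finset.range n,
    (∫ u : ℝ, ft (fun x => (t x : ℂ)) (-u) * Complex.exp (-(u * Z k ω) * Complex.I)
        / ft (fun y => (fη y : ℂ)) u) *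
      ((w (empCdf n (fun i => Z i ω) (Z k ω)) - w (G (Z k ω)) : ℝ) : ℂ)

/-!
Each summand of `R̄_n(t)` is a deconvolution integral times an increment of `w`. Since `t*`
vanishes outside `[-πm, πm]`, Cauchy–Schwarz bounds the integral by
`‖t*‖_{L²} (∫_{-πm}^{πm} |f_η*|⁻²)^{1/2}`, and Plancherel, `‖t*‖²_{L²} = 2π ‖t‖²_{L²} = 2π`,
turns this into `2π √Δ_η(m)`. As `Ĝ_n` and `G` take values in `[0, 1]`, the increment is at most
`c_w ‖Ĝ_n − G‖_∞`, so the average over the `n` summands is at most `√Δ_η(m) c_w ‖Ĝ_n − G‖_∞`.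
Plancherel for `t` comes from identifying the Fourier integral of an `L¹ ∩ L²` function with
its `L²` Fourier transform.
-/

open FourierTransform Set

theorem MeasureTheory.MemLp.norm_toLp_two_sq {α E : Type*} [MeasurableSpace α] {μ : Measure α}
    [NormedAddCommGroup E] {f : α → E} (hf : MemLp f 2 μ) :
    ‖hf.toLp f‖ ^ 2 = ∫ x, ‖f x‖ ^ 2 ∂μ := by
  rw [Lp.norm_toLp, hf.eLpNorm_eq_integral_rpow_norm two_ne_zero ENNReal.ofNat_ne_top,
    ENNReal.toReal_ofReal (by positivity), ENNReal.toReal_ofNat, ← one_div, ← Real.sqrt_eq_rpow]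
  simp only [Real.rpow_two]
  exact Real.sq_sqrt (integral_nonneg fun _ => by positivity)

section Plancherel

variable {V : Type*} [NormedAddCommGroup V] [InnerProductSpace ℝ V] [FiniteDimensional ℝ V]
  [MeasurableSpace V] [BorelSpace V]

/-- Both sides induce the same tempered distribution, by the self-adjointness
`∫ 𝓕 f * g = ∫ f * 𝓕 g` of the Fourier integral. -/
theorem MeasureTheory.Lp.fourier_toLp_eq {f : V → ℂ} (hf : Integrable f) (hf2 : MemLp f 2)
    (hFf : MemLp (𝓕 f) 2) : 𝓕 (hf2.toLp f) = hFf.toLp (𝓕 f) := by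
  apply LinearMap.ker_eq_bot.mp
    (Lp.ker_toTemperedDistributionCLM_eq_bot (F := ℂ) (μ := (volume : Measure V)) (p := 2))
  simp only [ContinuousLinearMap.coe_coe, Lp.toTemperedDistributionCLM_apply]
  rw [← Lp.fourier_toTemperedDistribution_eq]
  ext g
  rw [TemperedDistribution.fourier_apply, Lp.toTemperedDistribution_apply,
    Lp.toTemperedDistribution_apply]
  have hflip : (innerₗ V).flip = innerₗ V := LinearMap.ext₂ fun x y => real_inner_comm x y
  have hswap : ∫ x, 𝓕 f x * g x = ∫ x, f x * 𝓕 (g : V → ℂ) x := by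
    have := VectorFourier.integral_fourierIntegral_smul_eq_flip (μ := volume) (ν := volume)
      (L := innerₗ V) Real.continuous_fourierChar continuous_inner hf g.integrable
    rwa [hflip] at this
  calc ∫ x, 𝓕 g x • hf2.toLp f x = ∫ x, 𝓕 g x • f x :=
        integral_congr_ae (hf2.coeFn_toLp.mono fun x hx => by simp only [hx])
    _ = ∫ x, g x • 𝓕 f x := by
        simp only [smul_eq_mul, SchwartzMap.fourier_coe, mul_comm (g _),
          mul_comm (𝓕 (g : V → ℂ) _)]
        exact hswap.symm
    _ = ∫ x, g x • hFf.toLp (𝓕 f) x :=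
        integral_congr_ae (hFf.coeFn_toLp.mono fun x hx => by simp only [hx])

theorem integral_norm_fourier_sq_eq {f : V → ℂ} (hf : Integrable f) (hf2 : MemLp f 2)
    (hFf : MemLp (𝓕 f) 2) : ∫ ξ, ‖𝓕 f ξ‖ ^ 2 = ∫ x, ‖f x‖ ^ 2 := by
  rw [← hFf.norm_toLp_two_sq, ← Lp.fourier_toLp_eq hf hf2 hFf, Lp.norm_fourier_eq,
    hf2.norm_toLp_two_sq]

end Plancherel

theorem fourier_eq_ft (f : ℝ → ℂ) (ξ : ℝ) : 𝓕 f ξ = ft f (2 * π * ξ) := by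
  rw [Real.fourier_real_eq_integral_exp_smul, ft]
  congr 1 with x
  rw [smul_eq_mul]
  congr 2
  push_cast
  ring

theorem continuous_ft {f : ℝ → ℂ} (hf : Integrable f) : Continuous (ft f) := by
  have hF : Continuous (𝓕 f) :=
    VectorFourier.fourierIntegral_continuous Real.continuous_fourierChar continuous_inner hf
  have : ft f = fun u => 𝓕 f ((2 * π)⁻¹ * u) := by
    ext u
    rw [fourier_eq_ft, mul_inv_cancel_left₀ two_pi_pos.ne']
  rw [this]
  fun_prop

theorem integral_norm_ft_sq_eq {f : ℝ → ℂ} (hf : Integrable f) (hf2 : MemLp f 2)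
    (hsupp : HasCompactSupport (ft f)) :
    ∫ u, ‖ft f u‖ ^ 2 = 2 * π * ∫ x, ‖f x‖ ^ 2 := by
  have hFf : 𝓕 f = ft f ∘ Homeomorph.mulLeft₀ (2 * π) two_pi_pos.ne' := funext (fourier_eq_ft f)
  have hFf2 : MemLp (𝓕 f) 2 := by
    rw [hFf]
    exact ((continuous_ft hf).comp (Homeomorph.continuous _)).memLp_of_hasCompactSupport
      (hsupp.comp_homeomorph _)
  have hscale := Measure.integral_comp_mul_left (fun u => ‖ft f u‖ ^ 2) (2 * π)
  rw [← integral_norm_fourier_sq_eq hf hf2 hFf2, hFf]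
  simp only [Function.comp_apply, Homeomorph.coe_mulLeft₀, hscale, smul_eq_mul,
    abs_of_pos (inv_pos.2 two_pi_pos)]
  field_simp

theorem norm_integral_mul_sq_le {α 𝕜 : Type*} [MeasurableSpace α] {μ : Measure α} [RCLike 𝕜]
    {f g : α → 𝕜} (hf : MemLp f 2 μ) (hg : MemLp g 2 μ) :
    ‖∫ x, f x * g x ∂μ‖ ^ 2 ≤ (∫ x, ‖f x‖ ^ 2 ∂μ) * ∫ x, ‖g x‖ ^ 2 ∂μ := by
  have hholder := integral_mul_norm_le_Lp_mul_Lq (p := 2) (q := 2) Real.HolderConjugate.two_two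
    (by simpa using hf) (by simpa using hg)
  simp only [Real.rpow_two] at hholder
  have hnorm : ‖∫ x, f x * g x ∂μ‖ ≤ √(∫ x, ‖f x‖ ^ 2 ∂μ) * √(∫ x, ‖g x‖ ^ 2 ∂μ) := by
    simp only [Real.sqrt_eq_rpow]
    refine (norm_integral_le_integral_norm _).trans ?_
    simpa only [norm_mul, one_div] using hholder
  calc ‖∫ x, f x * g x ∂μ‖ ^ 2 ≤ (√(∫ x, ‖f x‖ ^ 2 ∂μ) * √(∫ x, ‖g x‖ ^ 2 ∂μ)) ^ 2 := by
        gcongr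
    _ = (∫ x, ‖f x‖ ^ 2 ∂μ) * ∫ x, ‖g x‖ ^ 2 ∂μ := by
        rw [mul_pow, Real.sq_sqrt (integral_nonneg fun _ => by positivity),
          Real.sq_sqrt (integral_nonneg fun _ => by positivity)]

theorem norm_integral_mul_exp_div_sq_le {T F : ℝ → ℂ} (hT : Continuous T) (hF : Continuous F)
    {L : ℝ} (hT0 : ∀ u ∉ Icc (-L) L, T u = 0)
    (hB : IntegrableOn (fun u => 1 / ‖F u‖ ^ 2) (Icc (-L) L)) (z : ℝ) :
    ‖∫ u : ℝ, T (-u) * Complex.exp (-(u * z) * Complex.I) / F u‖ ^ 2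
      ≤ (∫ u, ‖T u‖ ^ 2) * ∫ u in Icc (-L) L, 1 / ‖F u‖ ^ 2 := by
  set φ : ℝ → ℂ := fun u => T (-u) * Complex.exp (-(u * z) * Complex.I)
  set ψ : ℝ → ℂ := (Icc (-L) L).indicator fun u => (F u)⁻¹
  have hnorm_exp (u : ℝ) : ‖Complex.exp (-(u * z) * Complex.I)‖ = 1 := by
    rw [← Complex.ofReal_mul, ← Complex.ofReal_neg, Complex.norm_exp_ofReal_mul_I]
  have hsplit (u : ℝ) : T (-u) * Complex.exp (-(u * z) * Complex.I) / F u = φ u * ψ u := by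
    by_cases hu : u ∈ Icc (-L) L
    · simp only [φ, ψ, indicator_of_mem hu, div_eq_mul_inv]
    · have hnu : -u ∉ Icc (-L) L := fun h => hu ⟨by linarith [h.2], by linarith [h.1]⟩
      simp only [φ, ψ, hT0 _ hnu, zero_mul, zero_div]
  have hφ : MemLp φ 2 :=
    ((hT.comp continuous_neg).mul (by fun_prop)).memLp_of_hasCompactSupport
      (((HasCompactSupport.intro isCompact_Icc hT0).comp_homeomorph (Homeomorph.neg ℝ)).mul_right)
  have hψ_sq : (fun u => ‖ψ u‖ ^ 2) = (Icc (-L) L).indicator fun u => 1 / ‖F u‖ ^ 2 := by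
    ext u
    by_cases hu : u ∈ Icc (-L) L
    · simp [ψ, indicator_of_mem hu]
    · simp [ψ, indicator_of_notMem hu]
  have hψ : MemLp ψ 2 := by
    have hψ_meas : Measurable ψ := hF.measurable.inv.indicator measurableSet_Icc
    refine (memLp_two_iff_integrable_sq_norm hψ_meas.aestronglyMeasurable).2 ?_
    rw [hψ_sq]
    exact hB.integrable_indicator measurableSet_Icc
  calc ‖∫ u : ℝ, T (-u) * Complex.exp (-(u * z) * Complex.I) / F u‖ ^ 2
      = ‖∫ u, φ u * ψ u‖ ^ 2 := by simp only [hsplit]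
    _ ≤ (∫ u, ‖φ u‖ ^ 2) * ∫ u, ‖ψ u‖ ^ 2 := norm_integral_mul_sq_le hφ hψ
    _ = (∫ u, ‖T u‖ ^ 2) * ∫ u in Icc (-L) L, 1 / ‖F u‖ ^ 2 := by
        simp only [φ, norm_mul, hnorm_exp, mul_one, hψ_sq]
        rw [integral_neg_eq_self (fun u => ‖T u‖ ^ 2), integral_indicator measurableSet_Icc]

theorem empCdf_mem_Icc (n : ℕ) (z : ℕ → ℝ) (x : ℝ) : empCdf n z x ∈ Icc 0 1 := by
  rw [empCdf, Finset.sum_boole]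
  exact ⟨by positivity, div_le_one_of_le₀ (mod_cast (Finset.card_filter_le _ _).trans
    (Finset.card_range n).le) n.cast_nonneg⟩

theorem abs_sub_le_iSup_abs_sub {α : Type*} {f g : α → ℝ} (hf : ∀ x, f x ∈ Icc 0 1)
    (hg : ∀ x, g x ∈ Icc 0 1) (x : α) : |f x - g x| ≤ ⨆ y, |f y - g y| := by
  refine le_ciSup (f := fun y => |f y - g y|) ⟨1, ?_⟩ x
  rintro _ ⟨y, rfl⟩
  exact abs_sub_le_iff.2 ⟨by linarith [(hf y).2, (hg y).1], by linarith [(hf y).1, (hg y).2]⟩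

theorem abs_comp_sub_le_mul_iSup {α : Type*} {f g : α → ℝ} {w : ℝ → ℝ} {c : ℝ}
    (hw : ∀ x ∈ Icc (0 : ℝ) 1, ∀ y ∈ Icc (0 : ℝ) 1, |w x - w y| ≤ c * |x - y|)
    (hf : ∀ x, f x ∈ Icc 0 1) (hg : ∀ x, g x ∈ Icc 0 1) (x : α) :
    |w (f x) - w (g x)| ≤ c * ⨆ y, |f y - g y| := by
  have hc : 0 ≤ c := by
    simpa using (abs_nonneg _).trans (hw 0 ⟨le_rfl, zero_le_one⟩ 1 ⟨zero_le_one, le_rfl⟩)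
  exact (hw _ (hf x) _ (hg x)).trans
    (mul_le_mul_of_nonneg_left (abs_sub_le_iSup_abs_sub hf hg x) hc)

theorem deltaEta_eq_setIntegral (fη : ℝ → ℝ) (m : ℕ) :
    deltaEta fη m = (2 * π)⁻¹ *
      ∫ u in Icc (-(π * m)) (π * m), 1 / ‖ft (fun y => (fη y : ℂ)) u‖ ^ 2 := by
  rw [deltaEta, intervalIntegral.integral_of_le (neg_le_self (by positivity)),
    integral_Icc_eq_integral_Ioc]

theorem deltaEta_nonneg (fη : ℝ → ℝ) (m : ℕ) : 0 ≤ deltaEta fη m := by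
  rw [deltaEta_eq_setIntegral]
  exact mul_nonneg (by positivity) (setIntegral_nonneg measurableSet_Icc fun _ _ => by positivity)

theorem norm_rbar_le {Ω : Type*} (Z : ℕ → Ω → ℝ) (G w fη : ℝ → ℝ) (n : ℕ) (t : ℝ → ℝ) (ω : Ω)
    {C D : ℝ} (hC : 0 ≤ C)
    (hI : ∀ z : ℝ, ‖∫ u : ℝ, ft (fun x => (t x : ℂ)) (-u) * Complex.exp (-(u * z) * Complex.I)
        / ft (fun y => (fη y : ℂ)) u‖ ≤ 2 * π * C)
    (hw : ∀ z, |w (empCdf n (fun i => Z i ω) z) - w (G z)| ≤ D) :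
    ‖rbar Z G w fη n t ω‖ ≤ C * D := by
  have hD : 0 ≤ D := (abs_nonneg _).trans (hw 0)
  have hterm : ∀ k ∈ Finset.range n,
      ‖(∫ u : ℝ, ft (fun x => (t x : ℂ)) (-u) * Complex.exp (-(u * Z k ω) * Complex.I)
          / ft (fun y => (fη y : ℂ)) u) *
        ((w (empCdf n (fun i => Z i ω) (Z k ω)) - w (G (Z k ω)) : ℝ) : ℂ)‖ ≤ 2 * π * C * D := by
    intro k _
    rw [norm_mul, Complex.norm_real, Real.norm_eq_abs]
    exact mul_le_mul (hI _) (hw _) (abs_nonneg _) (by positivity)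
  rw [rbar, norm_mul, Complex.norm_real, Real.norm_of_nonneg (by positivity)]
  calc (2 * π * n)⁻¹ * ‖∑ k ∈ Finset.range n, _‖
      ≤ (2 * π * n)⁻¹ * (n * (2 * π * C * D)) := by
        gcongr
        exact (norm_sum_le _ _).trans (by simpa using Finset.sum_le_card_nsmul _ _ _ hterm)
    _ = C * D * (n / n) := by field_simp
    _ ≤ C * D := mul_le_of_le_one_right (by positivity) (div_self_le_one _)

theorem norm_integral_ft_mul_exp_div_ft_le {t fη : ℝ → ℝ} {m : ℕ} (htint : Integrable t)
    (htL2 : MemLp t 2) (htnorm : ∫ x, t x ^ 2 = 1)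
    (htsupp : ∀ u ∉ Icc (-(π * m)) (π * m), ft (fun x => (t x : ℂ)) u = 0)
    (hfηint : Integrable fη)
    (hΔ : IntervalIntegrable (fun u => 1 / ‖ft (fun y => (fη y : ℂ)) u‖ ^ 2)
      volume (-(π * m)) (π * m)) (z : ℝ) :
    ‖∫ u : ℝ, ft (fun x => (t x : ℂ)) (-u) * Complex.exp (-(u * z) * Complex.I)
      / ft (fun y => (fη y : ℂ)) u‖ ≤ 2 * π * √(deltaEta fη m) := by
  have htint' : Integrable (fun x => (t x : ℂ)) := htint.ofReal
  have hfηint' : Integrable (fun y => (fη y : ℂ)) := hfηint.ofReal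
  have hplancherel : ∫ u, ‖ft (fun x => (t x : ℂ)) u‖ ^ 2 = 2 * π := by
    rw [integral_norm_ft_sq_eq htint' htL2.ofReal (.intro isCompact_Icc htsupp)]
    simp [htnorm]
  have h := norm_integral_mul_exp_div_sq_le (continuous_ft htint')
    (continuous_ft hfηint') htsupp
    ((integrableOn_Icc_iff_integrableOn_Ioc (by simp)).2 hΔ.1) z
  refine (pow_le_pow_iff_left₀ (norm_nonneg _) (by positivity) two_ne_zero).1 (h.trans_eq ?_)
  rw [hplancherel, mul_pow, Real.sq_sqrt (deltaEta_nonneg fη m), deltaEta_eq_setIntegral]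
  field_simp

theorem remainder_process_pointwise_bound_general
    {Ω : Type*} [MeasurableSpace Ω] (μ : Measure Ω) [IsProbabilityMeasure μ]
    (n : ℕ)
    (Z : ℕ → Ω → ℝ)
    (G : ℝ → ℝ) (hG : ∀ x, G x = (μ {ω | Z 0 ω ≤ x}).toReal)
    (fη : ℝ → ℝ)
    (hfηint : Integrable fη)
    (w : ℝ → ℝ) (cw : ℝ)
    (hwlip : ∀ x ∈ Set.Icc (0 : ℝ) 1, ∀ y ∈ Set.Icc (0 : ℝ) 1, |w x - w y| ≤ cw * |x - y|)
    (m : ℕ)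
    (hΔ : IntervalIntegrable (fun u => 1 / ‖ft (fun y => (fη y : ℂ)) u‖ ^ 2)
      volume (-(π * m)) (π * m))
    (t : ℝ → ℝ)
    (htint : Integrable t) (htL2 : MemLp t 2 (volume : Measure ℝ))
    (htnorm : (∫ x : ℝ, (t x) ^ 2) = 1)
    (htsupp : ∀ u : ℝ, u ∉ Set.Icc (-(π * m)) (π * m) → ft (fun x => (t x : ℂ)) u = 0)
    (ω : Ω) :
    ‖rbar Z G w fη n t ω‖ ^ 2
      ≤ cw ^ 2 * deltaEta fη m *
          (⨆ x : ℝ, |empCdf n (fun i => Z i ω) x - G x|) ^ 2 := by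
  have hG01 (x : ℝ) : G x ∈ Icc 0 1 := hG x ▸ ⟨ENNReal.toReal_nonneg, measureReal_le_one⟩
  calc ‖rbar Z G w fη n t ω‖ ^ 2
      ≤ (√(deltaEta fη m) * (cw * ⨆ x : ℝ, |empCdf n (fun i => Z i ω) x - G x|)) ^ 2 := by
        gcongr
        exact norm_rbar_le Z G w fη n t ω (Real.sqrt_nonneg _)
          (norm_integral_ft_mul_exp_div_ft_le htint htL2 htnorm htsupp hfηint hΔ)
          (abs_comp_sub_le_mul_iSup hwlip (empCdf_mem_Icc n _) hG01)
    _ = cw ^ 2 * deltaEta fη m * (⨆ x : ℝ, |empCdf n (fun i => Z i ω) x - G x|) ^ 2 := by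
        rw [mul_pow, mul_pow, Real.sq_sqrt (deltaEta_nonneg fη m)]
        ring

/-- For every `m ≥ 1` with `Δ_η(m) < ∞` and every `t ∈ L¹ ∩ L²(ℝ)` with
`‖t‖_{L²} = 1` and Fourier transform supported in `[-πm, πm]`, the remainder process
satisfies `|R̄_n(t)|² ≤ c_w² Δ_η(m) ‖Ĝ_n − G‖_∞²`. -/
theorem remainder_process_pointwise_bound
    {Ω : Type*} [MeasurableSpace Ω] (μ : Measure Ω) [IsProbabilityMeasure μ]
    (n : ℕ) (hn : 0 < n)
    (Z : ℕ → Ω → ℝ) (hZmeas : ∀ i, Measurable (Z i))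
    (G : ℝ → ℝ) (hG : ∀ x, G x = (μ {ω | Z 0 ω ≤ x}).toReal)
    (hident : ∀ i, Measure.map (Z i) μ = Measure.map (Z 0) μ)
    (fη : ℝ → ℝ) (hfηmeas : Measurable fη)
    (hfη0 : ∀ x, 0 ≤ fη x) (hfηint : Integrable fη) (hfηnorm : ∫ x : ℝ, fη x = 1)
    (hfηne : ∀ u : ℝ, ft (fun y => (fη y : ℂ)) u ≠ 0)
    (w : ℝ → ℝ) (cw : ℝ)
    (hwlip : ∀ x ∈ Set.Icc (0 : ℝ) 1, ∀ y ∈ Set.Icc (0 : ℝ) 1, |w x - w y| ≤ cw * |x - y|)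
    (m : ℕ) (hm : 1 ≤ m)
    (hΔ : IntervalIntegrable (fun u => 1 / ‖ft (fun y => (fη y : ℂ)) u‖ ^ 2)
      volume (-(π * m)) (π * m))
    (t : ℝ → ℝ) (htmeas : Measurable t)
    (htint : Integrable t) (htL2 : MemLp t 2 (volume : Measure ℝ))
    (htnorm : (∫ x : ℝ, (t x) ^ 2) = 1)
    (htsupp : ∀ u : ℝ, u ∉ Set.Icc (-(π * m)) (π * m) → ft (fun x => (t x : ℂ)) u = 0)
    (ω : Ω) :
    ‖rbar Z G w fη n t ω‖ ^ 2
      ≤ cw ^ 2 * deltaEta fη m *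
          (⨆ x : ℝ, |empCdf n (fun i => Z i ω) x - G x|) ^ 2 :=
  remainder_process_pointwise_bound_general μ n Z G hG fη hfηint w cw hwlip m hΔ t htint htL2 htnorm
    htsupp ω
end
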